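/- Let μ be the Gaussian measure on ℝ with mean α ∈ ℝ and variance β², where β > 0, let K > 0, let ρ ∈ {1, −1}, and set γ = (α + β² − ln K)/β. Then ∫_{{ω : ρ·e^ω ≥ ρ·K}} ω·e^ω dμ(ω) = e^{α + β²/2} · ((α + β²)·Φ(ργ) + ρβ·φ(γ)), where Φ is the standard normal cumulative distribution function and φ is the standard normal density. -/

import Mathlib

open MeasureTheory Real ProbabilityTheory
open Filter Topology
open scoped NNReal

/-- The standard normal cumulative distribution function
`Φ(x) = ∫_{−∞}^{x} (2π)^{−1/2} e^{−s²/2} ds`. -/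
noncomputable def stdNormalCDF (x : ℝ) : ℝ :=
  ∫ s in Set.Iic x, (Real.sqrt (2 * Real.pi))⁻¹ * Real.exp (-s ^ 2 / 2)

/-- The standard normal density `φ(x) = (2π)^{−1/2} e^{−x²/2}`. -/
noncomputable def stdNormalPDF (x : ℝ) : ℝ :=
  (Real.sqrt (2 * Real.pi))⁻¹ * Real.exp (-x ^ 2 / 2)

/-! Exponential tilting,
`gaussianPDFReal α β² x * eˣ = e^(α + β²/2) * gaussianPDFReal (α + β²) β² x`,
turns the integral into `e^(α + β²/2)` times the integral of `ω` over the event under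
`N(α + β², β²)`. Writing `ω = α + β² - ρβs` with `s` standard normal turns the event into
`{s ≤ ργ}`, and `∫_{s ≤ t} (a + bs) φ(s) ds = a Φ(t) - b φ(t)` because `φ' = -sφ`;
finally `φ(ργ) = φ(γ)`. -/

lemma gaussianPDFReal_zero_one : gaussianPDFReal 0 1 = stdNormalPDF := by
  ext x
  simp [gaussianPDFReal, stdNormalPDF]

lemma integrable_stdNormalPDF : Integrable stdNormalPDF :=
  gaussianPDFReal_zero_one ▸ integrable_gaussianPDFReal 0 1

lemma integrable_mul_stdNormalPDF : Integrable fun x => x * stdNormalPDF x := by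
  have h := (integrable_mul_exp_neg_mul_sq (by norm_num : (0 : ℝ) < 1 / 2)).const_mul
    (√(2 * π))⁻¹
  refine h.congr (ae_of_all _ fun x => ?_)
  simp only [stdNormalPDF]
  ring_nf

lemma hasDerivAt_stdNormalPDF (x : ℝ) : HasDerivAt stdNormalPDF (-x * stdNormalPDF x) x := by
  have h : HasDerivAt (fun s : ℝ => -s ^ 2 / 2) (-x) x :=
    ((hasDerivAt_pow 2 x).neg.div_const 2).congr_deriv (by push_cast; ring)
  refine (h.exp.const_mul (√(2 * π))⁻¹).congr_deriv ?_
  rw [stdNormalPDF]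
  ring

lemma tendsto_stdNormalPDF_atBot : Tendsto stdNormalPDF atBot (𝓝 0) := by
  have hsq : Tendsto (fun s : ℝ => s ^ 2) atBot atTop := by
    simpa [Function.comp_def] using
      (tendsto_pow_atTop (α := ℝ) two_ne_zero).comp tendsto_neg_atBot_atTop
  have hexp := tendsto_exp_atBot.comp ((tendsto_neg_atTop_atBot.comp hsq).atBot_div_const two_pos)
  have h := hexp.const_mul (√(2 * π))⁻¹
  rwa [mul_zero] at h

lemma integral_Iic_mul_stdNormalPDF (t : ℝ) :
    ∫ s in Set.Iic t, s * stdNormalPDF s = -stdNormalPDF t := by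
  have h := integral_Iic_of_hasDerivAt_of_tendsto' (f := fun s => -stdNormalPDF s) (a := t)
    (fun x _ => (hasDerivAt_stdNormalPDF x).neg.congr_deriv (by ring))
    integrable_mul_stdNormalPDF.integrableOn (by simpa using tendsto_stdNormalPDF_atBot.neg)
  simpa using h

lemma setIntegral_gaussianReal_eq_setIntegral_mul (μ : ℝ) {v : ℝ≥0} (hv : v ≠ 0) (f : ℝ → ℝ)
    {s : Set ℝ} (hs : MeasurableSet s) :
    ∫ x in s, f x ∂gaussianReal μ v = ∫ x in s, gaussianPDFReal μ v x * f x := by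
  rw [← integral_indicator hs, ← integral_indicator hs, integral_gaussianReal_eq_integral_smul hv]
  simp only [smul_eq_mul, Set.indicator_mul_right]

lemma setIntegral_Iic_const_add_mul_gaussianReal_zero_one (a b t : ℝ) :
    ∫ s in Set.Iic t, (a + b * s) ∂gaussianReal 0 1
      = a * stdNormalCDF t - b * stdNormalPDF t := by
  have hmul : ∀ s, stdNormalPDF s * (a + b * s) = a * stdNormalPDF s + b * (s * stdNormalPDF s) :=
    fun s => by ring
  rw [setIntegral_gaussianReal_eq_setIntegral_mul 0 one_ne_zero _ measurableSet_Iic,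
    gaussianPDFReal_zero_one, funext hmul,
    integral_add (integrable_stdNormalPDF.const_mul a).integrableOn
      (integrable_mul_stdNormalPDF.const_mul b).integrableOn,
    integral_const_mul, integral_const_mul, integral_Iic_mul_stdNormalPDF]
  change a * stdNormalCDF t + b * -stdNormalPDF t = _
  ring

lemma gaussianPDFReal_mul_exp (μ : ℝ) (v : ℝ≥0) (x : ℝ) :
    gaussianPDFReal μ v x * exp x = exp (μ + v / 2) * gaussianPDFReal (μ + v) v x := by
  rcases eq_or_ne v 0 with rfl | hv
  · simp
  have hv' : (v : ℝ) ≠ 0 := by exact_mod_cast hv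
  have hexp : -(x - μ) ^ 2 / (2 * v) + x = μ + v / 2 + -(x - (μ + v)) ^ 2 / (2 * v) := by
    field_simp
    ring
  rw [gaussianPDFReal, gaussianPDFReal, mul_assoc, ← exp_add, hexp, exp_add]
  ring

lemma integral_mul_exp_gaussianReal (μ : ℝ) (v : ℝ≥0) (f : ℝ → ℝ) :
    ∫ x, f x * exp x ∂gaussianReal μ v = exp (μ + v / 2) * ∫ x, f x ∂gaussianReal (μ + v) v := by
  rcases eq_or_ne v 0 with rfl | hv
  · simp [gaussianReal_zero_var, mul_comm]
  rw [integral_gaussianReal_eq_integral_smul hv, integral_gaussianReal_eq_integral_smul hv,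
    ← integral_const_mul]
  congr with x
  simp only [smul_eq_mul]
  linear_combination f x * gaussianPDFReal_mul_exp μ v x

lemma setIntegral_mul_exp_gaussianReal (μ : ℝ) (v : ℝ≥0) (f : ℝ → ℝ) {s : Set ℝ}
    (hs : MeasurableSet s) :
    ∫ x in s, f x * exp x ∂gaussianReal μ v
      = exp (μ + v / 2) * ∫ x in s, f x ∂gaussianReal (μ + v) v := by
  simp only [← integral_indicator hs, ← integral_mul_exp_gaussianReal, Set.indicator_mul_left]

lemma gaussianReal_map_const_add_mul (m c : ℝ) :
    (gaussianReal 0 1).map (fun t => m + c * t) = gaussianReal m (c ^ 2).toNNReal := by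
  have : (fun t => m + c * t) = (m + ·) ∘ (c * ·) := rfl
  rw [this, ← Measure.map_map (by fun_prop) (by fun_prop), gaussianReal_map_const_mul,
    gaussianReal_map_const_add]
  congr 1
  · simp
  · ext; simp [sq_nonneg]

lemma setIntegral_gaussianReal_eq_setIntegral_comp_const_add_mul (m : ℝ) {c : ℝ} (hc : c ≠ 0)
    (f : ℝ → ℝ) (s : Set ℝ) :
    ∫ x in s, f x ∂gaussianReal m (c ^ 2).toNNReal
      = ∫ t in (fun t => m + c * t) ⁻¹' s, f (m + c * t) ∂gaussianReal 0 1 := by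
  rw [← gaussianReal_map_const_add_mul]
  exact ((Homeomorph.mulLeft₀ c hc).trans (Homeomorph.addLeft m)).measurableEmbedding
    |>.setIntegral_map f s

lemma mul_le_mul_exp_iff_mul_log_le {K : ℝ} (hK : 0 < K) (ρ x : ℝ) :
    ρ * K ≤ ρ * exp x ↔ ρ * log K ≤ ρ * x := by
  rw [← exp_log hK, log_exp]
  rcases lt_trichotomy ρ 0 with hρ | rfl | hρ
  · rw [mul_le_mul_left_of_neg hρ, mul_le_mul_left_of_neg hρ, exp_le_exp]
  · simp
  · rw [mul_le_mul_iff_right₀ hρ, mul_le_mul_iff_right₀ hρ, exp_le_exp]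

theorem gaussian_integral_id_mul_exp_on_event (α β K ρ γ : ℝ) (hβ : 0 < β) (hK : 0 < K)
    (hρ : ρ = 1 ∨ ρ = -1) (hγ : γ = (α + β ^ 2 - Real.log K) / β) :
    ∫ ω in {ω : ℝ | ρ * Real.exp ω ≥ ρ * K}, ω * Real.exp ω
        ∂(gaussianReal α (Real.toNNReal (β ^ 2)))
      = Real.exp (α + β ^ 2 / 2) *
          ((α + β ^ 2) * stdNormalCDF (ρ * γ) + ρ * β * stdNormalPDF γ) := by
  have hρ2 : ρ ^ 2 = 1 := by rcases hρ with rfl | rfl <;> norm_num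
  have hβγ : β * γ = α + β ^ 2 - log K := by rw [hγ]; field_simp
  have hevent : {ω : ℝ | ρ * exp ω ≥ ρ * K} = {x | ρ * log K ≤ ρ * x} :=
    Set.ext fun x => mul_le_mul_exp_iff_mul_log_le hK ρ x
  have hpreimage : (fun s => α + β ^ 2 + -ρ * β * s) ⁻¹' {x | ρ * log K ≤ ρ * x}
      = Set.Iic (ρ * γ) := by
    ext s
    have hgap : ρ * (α + β ^ 2 + -ρ * β * s) - ρ * log K = β * (ρ * γ - s) := by
      linear_combination (-ρ) * hβγ - β * s * hρ2
    rw [Set.mem_preimage, Set.mem_ofPred, Set.mem_Iic, ← sub_nonneg, hgap,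
      mul_nonneg_iff_of_pos_left hβ, sub_nonneg]
  have hc : -ρ * β ≠ 0 := by rcases hρ with rfl | rfl <;> simp [hβ.ne']
  have hvar : (β ^ 2).toNNReal = ((-ρ * β) ^ 2).toNNReal := by rw [mul_pow, neg_sq, hρ2, one_mul]
  have hsymm : stdNormalPDF (ρ * γ) = stdNormalPDF γ := by simp [stdNormalPDF, mul_pow, hρ2]
  rw [hevent, setIntegral_mul_exp_gaussianReal _ _ _ (measurableSet_le (by fun_prop) (by fun_prop)),
    Real.coe_toNNReal _ (sq_nonneg β), hvar,
    setIntegral_gaussianReal_eq_setIntegral_comp_const_add_mul _ hc, hpreimage,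
    setIntegral_Iic_const_add_mul_gaussianReal_zero_one, hsymm]
  ring
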